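/- Let r ≥ 1 be an integer, G = (V,E) a finite simple graph, U ⊆ E, and S an independent set of the graph (V,U), i.e., no edge of U has both endpoints in S. For v ∈ V let deg_U(v) denote the number of edges of U incident to v. Suppose there exists a set M ⊆ E∖U such that: (a) for every v ∈ V, deg_U(v) + deg_M(v) ≥ r, and (b) for every endpoint v of an edge of U with v ∉ S, deg_U(v) + deg_M(v) ≤ r. Then there exists an inclusion-minimal r-edge cover X of G with U ⊆ X. -/

import Mathlib

/-!
By (a), `U ∪ M` is an `r`-edge cover; shrink it to an inclusion-minimal `r`-edge cover
`X ⊆ U ∪ M`. Since `S` is independent in `(V, U)`, every `e ∈ U` has an endpoint `v ∉ S`,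
and by (b) `v` has degree at most `r` in `U ∪ M`. An `r`-edge cover inside `U ∪ M` must
therefore keep every edge of `U ∪ M` at `v`, in particular `e`.
-/

/-- `X` is an `r`-edge cover (of a graph on vertex type `V`): every vertex is incident
to at least `r` edges of `X`. -/
def IsRECover {V : Type*} (r : ℕ) (X : Set (Sym2 V)) : Prop :=
  ∀ v : V, r ≤ ({e ∈ X | v ∈ e}).ncard

section

variable {V : Type*} [Finite V]

lemma ncard_incident_union_of_disjoint {A B : Set (Sym2 V)} (h : Disjoint A B) (v : V) :
    {e ∈ A ∪ B | v ∈ e}.ncard = {e ∈ A | v ∈ e}.ncard + {e ∈ B | v ∈ e}.ncard := by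
  rw [show {e ∈ A ∪ B | v ∈ e} = {e ∈ A | v ∈ e} ∪ {e ∈ B | v ∈ e} from Set.sep_union]
  exact Set.ncard_union_eq (h.mono (Set.sep_subset _ _) (Set.sep_subset _ _))

lemma IsRECover.mem_of_subset_of_ncard_le {r : ℕ} {X Y : Set (Sym2 V)} (hX : IsRECover r X)
    (hXY : X ⊆ Y) {e : Sym2 V} (he : e ∈ Y) {v : V} (hv : v ∈ e)
    (hdeg : {f ∈ Y | v ∈ f}.ncard ≤ r) : e ∈ X := by
  by_contra heX
  have hsub : {f ∈ X | v ∈ f} ⊆ {f ∈ Y | v ∈ f} := fun _ hf ↦ ⟨hXY hf.1, hf.2⟩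
  have hlt := (Set.ssubset_iff_of_subset hsub).2 ⟨e, ⟨he, hv⟩, fun h ↦ heX h.1⟩
  exact (hX v).not_gt ((Set.ncard_lt_ncard hlt).trans_le hdeg)

end

theorem stmt_6 {V : Type*} [Fintype V] (r : ℕ)
    (G : SimpleGraph V) (U : Set (Sym2 V)) (hU : U ⊆ G.edgeSet)
    (S : Set V) (hS : ∀ e ∈ U, ¬ ∀ v ∈ e, v ∈ S)
    (M : Set (Sym2 V)) (hM : M ⊆ G.edgeSet \ U)
    (ha : ∀ v : V, r ≤ ({e ∈ U | v ∈ e}).ncard + ({e ∈ M | v ∈ e}).ncard)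
    (hb : ∀ v : V, (∃ e ∈ U, v ∈ e) → v ∉ S →
        ({e ∈ U | v ∈ e}).ncard + ({e ∈ M | v ∈ e}).ncard ≤ r) :
    ∃ X : Set (Sym2 V), U ⊆ X ∧ X ⊆ G.edgeSet ∧ IsRECover r X ∧
      ∀ Y ⊂ X, ¬ IsRECover r Y := by
  have hUM : Disjoint U M := Set.disjoint_right.2 fun _ he ↦ (hM he).2
  have hcover : IsRECover r (U ∪ M) := fun v ↦
    (ncard_incident_union_of_disjoint hUM v).symm ▸ ha v
  obtain ⟨X, hXUM, hX⟩ := exists_minimal_le_of_wellFoundedLT (IsRECover r) (U ∪ M) hcover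
  refine ⟨X, fun e he ↦ ?_, hXUM.trans (Set.union_subset hU fun _ he ↦ (hM he).1), hX.prop,
    fun Y hY ↦ hX.not_prop_of_lt hY⟩
  obtain ⟨v, hve, hvS⟩ : ∃ v ∈ e, v ∉ S := by simpa using hS e he
  exact hX.prop.mem_of_subset_of_ncard_le hXUM (Or.inl he) hve
    ((ncard_incident_union_of_disjoint hUM v).trans_le (hb v ⟨e, he, hve⟩ hvS))
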